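/- arXiv:2307.01360 — 4 statements merged into one kernel-verified Lean document; each statement's English description precedes it below -/
import Mathlib

section
/- For all a,b,c,g ∈ ℂ, the Dotsenko–Fateev operator DF(a,b,c,g) coincides with the operator E₃(a+c+1, 2a+2c+g+2, b+c+1, 2b+2c+g+2, −2c, −a−b−2c−g−1): for every x ∈ ℂ the coefficients of ∂³, ∂², ∂ and 1 of the two operators agree. In particular, the accessory parameter satisfies A₀₀(a+c+1, 2a+2c+g+2, b+c+1, 2b+2c+g+2, −2c, −a−b−2c−g−1) = c(2a+2c+g+1)(2a+2b+2c+g+2). -/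
/-! Every coefficient is a polynomial in `a, b, c, g, x`, so each equality is a ring identity.
Under the substitution `e₇ = -(2a + 2b + 2c + g + 2)`, so `e₅e₆e₇` is the `x`-coefficient of `DF₃`
and the accessory parameter `A₀₀` has to be its constant term. -/

/-- Coefficient of ∂² of the Dotsenko–Fateev operator. -/
noncomputable def DF1 (a b c g x : ℂ) : ℂ :=
  -(x - 1) * x * (3*a*x + 3*b*x + 6*c*x + 2*g*x - 3*a - 3*c - g)

/-- Coefficient of ∂ of the Dotsenko–Fateev operator. -/
noncomputable def DF2 (a b c g x : ℂ) : ℂ :=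
  (2*a^2 + 4*a*b + 12*a*c + 3*a*g + 2*b^2 + 12*b*c + 3*b*g + 12*c^2 + 8*c*g + g^2
      + a + b + 6*c + g) * x^2
  + (-4*a^2 - 4*a*b - 16*a*c - 4*a*g - 8*b*c - 2*b*g - 12*c^2 - 8*c*g - g^2
      - 2*a - 6*c - g) * x
  + (2*a^2 + 4*a*c + a*g + 2*c^2 + c*g + a + c)

/-- Coefficient of 1 of the Dotsenko–Fateev operator. -/
noncomputable def DF3 (a b c g x : ℂ) : ℂ :=
  c * (2*a + 2*b + 2*c + g + 2) * (-(2*a + 2*b + 4*c + 2*g + 2)*x + 2*a + 2*c + g + 1)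

/-- The accessory parameter A₀₀(e₁,…,e₆) of the equation E₃. -/
noncomputable def A00 (e1 e2 e3 e4 e5 e6 : ℂ) : ℂ :=
  let e7 := 3 - (e1 + e2 + e3 + e4 + e5 + e6)
  (-4*(e1 + e2 - e3 - e4)^3 - 27*e5*e6*e7
    + 9*(e1 + e2 - e3 - e4)*(e5*e6 + e5*e7 + e6*e7 - 2)
    + 9*e1*e2*(e1 + e2 - 1) + 18*(e1 + e2 - 1)*(e3^2 + e3*e4 + e4^2)
    - 9*e3*e4*(e3 + e4 - 1) - 18*(e3 + e4 - 1)*(e1^2 + e1*e2 + e2^2)) / 54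

/-- Coefficient of ∂² of E₃. -/
noncomputable def E3coeff2 (e1 e2 e3 e4 : ℂ) (x : ℂ) : ℂ :=
  x*(x - 1)*((6 - e1 - e2 - e3 - e4)*x + e1 + e2 - 3)

/-- Coefficient of ∂ of E₃. -/
noncomputable def E3coeff1 (e1 e2 e3 e4 e5 e6 : ℂ) (x : ℂ) : ℂ :=
  let e7 := 3 - (e1 + e2 + e3 + e4 + e5 + e6)
  ((e5 + e6 + 1)*e7 + (e6 + 1)*(e5 + 1)) * x^2
  + (-(e5 + e6)*e7 - e1*e2 + e3*e4 - e5*e6 + 2*e1 + 2*e2 - 4) * x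
  + (e1 - 1)*(e2 - 1)

/-- Coefficient of 1 of E₃. -/
noncomputable def E3coeff0 (e1 e2 e3 e4 e5 e6 : ℂ) (x : ℂ) : ℂ :=
  let e7 := 3 - (e1 + e2 + e3 + e4 + e5 + e6)
  (e5*e6*e7) * x + A00 e1 e2 e3 e4 e5 e6

section

variable (a b c g : ℂ)

theorem DF1_eq_E3coeff2 (x : ℂ) :
    DF1 a b c g x
      = E3coeff2 (a + c + 1) (2*a + 2*c + g + 2) (b + c + 1) (2*b + 2*c + g + 2) x := by
  unfold DF1 E3coeff2
  ring

theorem DF2_eq_E3coeff1 (x : ℂ) :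
    DF2 a b c g x
      = E3coeff1 (a + c + 1) (2*a + 2*c + g + 2) (b + c + 1) (2*b + 2*c + g + 2)
          (-2*c) (-a - b - 2*c - g - 1) x := by
  unfold DF2 E3coeff1
  ring

theorem A00_DF_params :
    A00 (a + c + 1) (2*a + 2*c + g + 2) (b + c + 1) (2*b + 2*c + g + 2)
        (-2*c) (-a - b - 2*c - g - 1)
      = c * (2*a + 2*c + g + 1) * (2*a + 2*b + 2*c + g + 2) := by
  unfold A00
  ring

theorem DF3_eq_E3coeff0 (x : ℂ) :
    DF3 a b c g x
      = E3coeff0 (a + c + 1) (2*a + 2*c + g + 2) (b + c + 1) (2*b + 2*c + g + 2)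
          (-2*c) (-a - b - 2*c - g - 1) x := by
  rw [E3coeff0, A00_DF_params, DF3]
  ring

end

theorem DF_eq_E3 (a b c g : ℂ) :
    (∀ x : ℂ,
      x^2*(x - 1)^2 = x^2*(x - 1)^2 ∧
      DF1 a b c g x
        = E3coeff2 (a + c + 1) (2*a + 2*c + g + 2) (b + c + 1) (2*b + 2*c + g + 2) x ∧
      DF2 a b c g x
        = E3coeff1 (a + c + 1) (2*a + 2*c + g + 2) (b + c + 1) (2*b + 2*c + g + 2)
            (-2*c) (-a - b - 2*c - g - 1) x ∧
      DF3 a b c g x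
        = E3coeff0 (a + c + 1) (2*a + 2*c + g + 2) (b + c + 1) (2*b + 2*c + g + 2)
            (-2*c) (-a - b - 2*c - g - 1) x) ∧
    A00 (a + c + 1) (2*a + 2*c + g + 2) (b + c + 1) (2*b + 2*c + g + 2)
        (-2*c) (-a - b - 2*c - g - 1)
      = c * (2*a + 2*c + g + 1) * (2*a + 2*b + 2*c + g + 2) :=
  ⟨fun x => ⟨rfl, DF1_eq_E3coeff2 a b c g x, DF2_eq_E3coeff1 a b c g x,
    DF3_eq_E3coeff0 a b c g x⟩, A00_DF_params a b c g⟩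
end

section
/- S-value for the shift a → a−1 of the Dotsenko–Fateev equation: let P₋(a,b,c,g) = (x−1)²∂² − (x−1)(3a+3b+4c+2g+2−(a+c)/x)∂ + (2a+2b+2c+g+2)(a+b+2c+g+1−c/x), and let P₊(a,b,c,g) = x²(θ²+(e₅+e₆)θ+e₅e₆) + x(−2θ²+(4+4a+7c+2g+b)θ−6ca−6c²−2cb−3cg−6c) + (θ²−(e₁+e₂)θ+e₁e₂), where θ = x∂, e₁ = a+c+1, e₂ = 2a+2c+g+2, e₅ = −2c, e₆ = −a−b−2c−g−1. Then for every u holomorphic on an open set U ⊆ ℂ∖{0,1} with (DF(a,b,c,g)u)(x) = 0 for all x ∈ U, one has (P₊(a−1,b,c,g)(P₋(a,b,c,g)u))(x) = a(2a+g)(a+1+g+b+c)(2a+2b+2c+2+g)·u(x) for all x ∈ U. -/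
/-- The Dotsenko–Fateev operator DF(a,b,c,g) acting on a function u. -/
noncomputable def DFop (a b c g : ℂ) (u : ℂ → ℂ) : ℂ → ℂ := fun x =>
  x^2*(x - 1)^2 * iteratedDeriv 3 u x + DF1 a b c g x * iteratedDeriv 2 u x
    + DF2 a b c g x * deriv u x + DF3 a b c g x * u x

/-- The shift operator P₋ for a → a−1 acting on a function u. -/
noncomputable def Pan (a b c g : ℂ) (u : ℂ → ℂ) : ℂ → ℂ := fun x =>
  (x - 1)^2 * iteratedDeriv 2 u x
  - (x - 1) * (3*a + 3*b + 4*c + 2*g + 2 - (a + c)/x) * deriv u x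
  + (2*a + 2*b + 2*c + g + 2) * (a + b + 2*c + g + 1 - c/x) * u x

/-- The shift operator P₊ for a → a+1, in (x,θ)-form
`P₊ = x²((θ+e₅)(θ+e₆)) + x(−2θ²+(4+4a+7c+2g+b)θ−6ca−6c²−2cb−3cg−6c) + (θ−e₁)(θ−e₂)`,
acting on a function v, where θv = x·v′ and θ²v = x·v′ + x²·v″. -/
noncomputable def Pap (a b c g : ℂ) (v : ℂ → ℂ) : ℂ → ℂ := fun x =>
  let e1 := a + c + 1
  let e2 := 2*a + 2*c + g + 2
  let e5 := -2*c
  let e6 := -a - b - 2*c - g - 1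
  let t1 := x * deriv v x
  let t2 := x * deriv v x + x^2 * iteratedDeriv 2 v x
  x^2 * (t2 + (e5 + e6)*t1 + e5*e6 * v x)
  + x * (-2*t2 + (4 + 4*a + 7*c + 2*g + b)*t1
      + (-6*c*a - 6*c^2 - 2*c*b - 3*c*g - 6*c) * v x)
  + (t2 - (e1 + e2)*t1 + e1*e2 * v x)

/-!
On `U` the function `u` is analytic, so both sides only involve the 4-jet of `u` at `x`.
As differential operators with coefficients regular away from `x = 0`,
`Pap (a-1) ∘ Pan a - a(2a+g)(a+1+g+b+c)(2a+2b+2c+2+g) = (x-1)² ∂ ∘ DF + r · DF`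
with `r = (-(a+c+1) + (2+2a+b+3c+g) x - (1+a+b+2c+g) x²) / x`,
and both `DF u` and its derivative vanish on `U`.
-/

open Filter Topology

section
variable {𝕜 F : Type*} [NontriviallyNormedField 𝕜] [NormedAddCommGroup F] [NormedSpace 𝕜 F]

theorem deriv_deriv_eq_iteratedDeriv_two (u : 𝕜 → F) :
    deriv (deriv u) = iteratedDeriv 2 u := by
  rw [iteratedDeriv_succ, iteratedDeriv_one]

@[fun_prop]
theorem AnalyticAt.differentiableAt_iteratedDeriv [CompleteSpace F] {u : 𝕜 → F} {x : 𝕜}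
    (hu : AnalyticAt 𝕜 u x) (k : ℕ) : DifferentiableAt 𝕜 (iteratedDeriv k u) x := by
  rw [iteratedDeriv_eq_iterate]
  exact (hu.iterated_deriv k).differentiableAt

end

theorem Pap_apply (a b c g x : ℂ) (v : ℂ → ℂ) :
    Pap a b c g v x = x^2 * (x - 1)^2 * iteratedDeriv 2 v x
      + (-(a + b + 4*c + g) * x^3 + (4*a + b + 7*c + 2*g + 2) * x^2 - (3*a + 3*c + g + 2) * x)
        * deriv v x
      + (2*c * (a + b + 2*c + g + 1) * x^2 - c * (6*a + 6*c + 2*b + 3*g + 6) * x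
        + (a + c + 1) * (2*a + 2*c + g + 2)) * v x := by
  simp only [Pap]
  ring

theorem deriv_Pan {a b c g x : ℂ} {u : ℂ → ℂ} (hx : x ≠ 0) (hu : AnalyticAt ℂ u x) :
    deriv (Pan a b c g u) x =
      (x - 1)^2 * iteratedDeriv 3 u x
      + (2*(x - 1) - (x - 1) * (3*a + 3*b + 4*c + 2*g + 2 - (a + c)/x)) * iteratedDeriv 2 u x
      + (-(3*a + 3*b + 4*c + 2*g + 2) + (a + c)/x^2
          + (2*a + 2*b + 2*c + g + 2) * (a + b + 2*c + g + 1 - c/x)) * deriv u x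
      + (2*a + 2*b + 2*c + g + 2) * c / x^2 * u x := by
  unfold Pan
  simp (disch := first | fun_prop | assumption)
    only [deriv_fun_add, deriv_fun_sub, deriv_fun_mul, deriv_fun_pow, deriv_id'', deriv_const',
      deriv_const_div_id, ← iteratedDeriv_succ, deriv_deriv_eq_iteratedDeriv_two,
      Nat.add_one_sub_one, Nat.reduceAdd]
  field_simp
  ring

theorem iteratedDeriv_two_Pan {a b c g x : ℂ} {u : ℂ → ℂ} (hx : x ≠ 0)
    (hu : AnalyticAt ℂ u x) :
    iteratedDeriv 2 (Pan a b c g u) x =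
      (x - 1)^2 * iteratedDeriv 4 u x
      + (4*(x - 1) - (x - 1) * (3*a + 3*b + 4*c + 2*g + 2 - (a + c)/x)) * iteratedDeriv 3 u x
      + (2 + 2 * (-(3*a + 3*b + 4*c + 2*g + 2) + (a + c)/x^2)
          + (2*a + 2*b + 2*c + g + 2) * (a + b + 2*c + g + 1 - c/x)) * iteratedDeriv 2 u x
      + (-2 * (a + c) / x^3 + 2 * (2*a + 2*b + 2*c + g + 2) * c / x^2) * deriv u x
      - 2 * (2*a + 2*b + 2*c + g + 2) * c / x^3 * u x := by
  have hnear : ∀ᶠ t in 𝓝 x, t ≠ 0 ∧ AnalyticAt ℂ u t :=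
    (eventually_ne_nhds hx).and hu.eventually_analyticAt
  have hderiv : deriv (Pan a b c g u) =ᶠ[𝓝 x] _ := hnear.mono fun t ht => deriv_Pan ht.1 ht.2
  rw [← deriv_deriv_eq_iteratedDeriv_two, hderiv.deriv_eq]
  simp (disch := first | fun_prop (disch := simp [hx]) | simp [hx])
    only [deriv_fun_add, deriv_fun_sub, deriv_fun_mul, deriv_fun_div, deriv_fun_pow, deriv_id'',
      deriv_const', deriv_const_div_id, ← iteratedDeriv_succ, deriv_deriv_eq_iteratedDeriv_two,
      Nat.add_one_sub_one, Nat.reduceAdd]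
  field_simp
  ring

theorem deriv_DFop {a b c g x : ℂ} {u : ℂ → ℂ} (hu : AnalyticAt ℂ u x) :
    deriv (DFop a b c g u) x =
      x^2 * (x - 1)^2 * iteratedDeriv 4 u x
      + (2*x*(x - 1)*(2*x - 1) + DF1 a b c g x) * iteratedDeriv 3 u x
      + (-(2*x - 1) * (3*a*x + 3*b*x + 6*c*x + 2*g*x - 3*a - 3*c - g)
          - (x - 1) * x * (3*a + 3*b + 6*c + 2*g) + DF2 a b c g x) * iteratedDeriv 2 u x
      + (2 * (2*a^2 + 4*a*b + 12*a*c + 3*a*g + 2*b^2 + 12*b*c + 3*b*g + 12*c^2 + 8*c*g + g^2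
            + a + b + 6*c + g) * x
          + (-4*a^2 - 4*a*b - 16*a*c - 4*a*g - 8*b*c - 2*b*g - 12*c^2 - 8*c*g - g^2
            - 2*a - 6*c - g) + DF3 a b c g x) * deriv u x
      - c * (2*a + 2*b + 2*c + g + 2) * (2*a + 2*b + 4*c + 2*g + 2) * u x := by
  unfold DFop DF1 DF2 DF3
  simp (disch := fun_prop)
    only [neg_sub, neg_mul, neg_add_rev, pow_one, deriv_fun_add, deriv_fun_sub, deriv_fun_mul,
      deriv_fun_pow, deriv_id'', deriv_const', deriv_const_sub_id', deriv_const_mul_id',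
      ← iteratedDeriv_succ, deriv_deriv_eq_iteratedDeriv_two, Nat.add_one_sub_one, Nat.reduceAdd]
  ring

theorem DF_Svalue_a_minus_general (a b c g : ℂ) (U : Set ℂ) (hU : IsOpen U)
    (hU0 : (0 : ℂ) ∉ U)
    (u : ℂ → ℂ) (hu : DifferentiableOn ℂ u U)
    (hsol : ∀ x ∈ U, DFop a b c g u x = 0) (x : ℂ) (hx : x ∈ U) :
    Pap (a - 1) b c g (Pan a b c g u) x
      = a * (2*a + g) * (a + 1 + g + b + c) * (2*a + 2*b + 2*c + 2 + g) * u x := by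
  have hx0 : x ≠ 0 := ne_of_mem_of_not_mem hx hU0
  have hua : AnalyticAt ℂ u x := hu.analyticOnNhd hU x hx
  have hDF : DFop a b c g u x = 0 := hsol x hx
  have hDF' : deriv (DFop a b c g u) x = 0 := by
    have hzero : DFop a b c g u =ᶠ[𝓝 x] fun _ => 0 :=
      eventually_of_mem (hU.mem_nhds hx) hsol
    rw [hzero.deriv_eq, deriv_const]
  rw [deriv_DFop hua] at hDF'
  rw [Pap_apply, iteratedDeriv_two_Pan hx0 hua, deriv_Pan hx0 hua]
  unfold Pan DFop DF1 DF2 DF3 at *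
  linear_combination (norm := skip) (x - 1)^2 * hDF'
    + (-(a + c + 1) + (2 + 2*a + b + 3*c + g)*x - (1 + a + b + 2*c + g)*x^2) / x * hDF
  field_simp
  ring

theorem DF_Svalue_a_minus (a b c g : ℂ) (U : Set ℂ) (hU : IsOpen U)
    (hU0 : (0 : ℂ) ∉ U) (hU1 : (1 : ℂ) ∉ U)
    (u : ℂ → ℂ) (hu : DifferentiableOn ℂ u U)
    (hsol : ∀ x ∈ U, DFop a b c g u x = 0) (x : ℂ) (hx : x ∈ U) :
    Pap (a - 1) b c g (Pan a b c g u) x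
      = a * (2*a + g) * (a + 1 + g + b + c) * (2*a + 2*b + 2*c + 2 + g) * u x :=
  DF_Svalue_a_minus_general a b c g U hU hU0 u hu hsol x hx
end

section
/- Factorization of the Dotsenko–Fateev operator at a = −1: with Dn₁ = (x−1)∂ − (2b+2c+g+1) and Dn₂ = x(θ−2c)(θ−b−2c−g) − (θ−c)(θ−2c−g), where θ = x∂, for every function u holomorphic on an open set U ⊆ ℂ∖{0,1} and every x ∈ U one has (DF(−1,b,c,g)u)(x) = (Dn₁(Dn₂ u))(x). -/
/-- The second factor Dn₂ = x(θ−2c)(θ−b−2c−g) − (θ−c)(θ−2c−g) acting on u,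
where θu = x·u′ and θ²u = x·u′ + x²·u″. -/
noncomputable def Dn2 (b c g : ℂ) (u : ℂ → ℂ) : ℂ → ℂ := fun x =>
  let t1 := x * deriv u x
  let t2 := x * deriv u x + x^2 * iteratedDeriv 2 u x
  x * (t2 - (2*c + (b + 2*c + g))*t1 + 2*c*(b + 2*c + g) * u x)
  - (t2 - (c + (2*c + g))*t1 + c*(2*c + g) * u x)

/-- The first factor Dn₁ = (x−1)∂ − (2b+2c+g+1) acting on a function w. -/
noncomputable def Dn1 (b c g : ℂ) (w : ℂ → ℂ) : ℂ → ℂ := fun x =>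
  (x - 1) * deriv w x - (2*b + 2*c + g + 1) * w x

open Polynomial

section PolynomialCoefficients

variable {𝕜 : Type*} [NontriviallyNormedField 𝕜]

theorem AnalyticAt.hasDerivAt_iteratedDeriv [CompleteSpace 𝕜] {f : 𝕜 → 𝕜} {x : 𝕜}
    (hf : AnalyticAt 𝕜 f x) (n : ℕ) : HasDerivAt (iteratedDeriv n f) (iteratedDeriv (n + 1) f x) x := by
  rw [iteratedDeriv_succ, iteratedDeriv_eq_iterate]
  exact (hf.iterated_deriv n).differentiableAt.hasDerivAt

noncomputable def secondOrderOp (p₂ p₁ p₀ : 𝕜[X]) (u : 𝕜 → 𝕜) (x : 𝕜) : 𝕜 :=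
  p₂.eval x * iteratedDeriv 2 u x + p₁.eval x * deriv u x + p₀.eval x * u x

theorem hasDerivAt_secondOrderOp [CompleteSpace 𝕜] (p₂ p₁ p₀ : 𝕜[X]) {u : 𝕜 → 𝕜} {x : 𝕜}
    (hu : AnalyticAt 𝕜 u x) :
    HasDerivAt (secondOrderOp p₂ p₁ p₀ u)
      (p₂.eval x * iteratedDeriv 3 u x
        + (derivative p₂ + p₁).eval x * iteratedDeriv 2 u x
        + (derivative p₁ + p₀).eval x * deriv u x
        + (derivative p₀).eval x * u x) x := by
  have hu₀ : HasDerivAt u (deriv u x) x := hu.differentiableAt.hasDerivAt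
  have hu₁ : HasDerivAt (deriv u) (iteratedDeriv 2 u x) x := by
    simpa only [iteratedDeriv_one] using hu.hasDerivAt_iteratedDeriv 1
  have hu₂ : HasDerivAt (iteratedDeriv 2 u) (iteratedDeriv 3 u x) x :=
    hu.hasDerivAt_iteratedDeriv 2
  refine ((((p₂.hasDerivAt x).mul hu₂).add ((p₁.hasDerivAt x).mul hu₁)).add
    ((p₀.hasDerivAt x).mul hu₀)).congr_deriv ?_
  simp only [eval_add]
  ring

end PolynomialCoefficients

theorem Dn2_eq_secondOrderOp (b c g : ℂ) (u : ℂ → ℂ) :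
    Dn2 b c g u = secondOrderOp (X ^ 2 * (X - 1))
      ((1 - C (b + 4 * c + g)) * X ^ 2 - (1 - C (3 * c + g)) * X)
      (C (2 * c * (b + 2 * c + g)) * X - C (c * (2 * c + g))) u := by
  funext x
  simp only [Dn2, secondOrderOp, eval_sub, eval_mul, eval_pow, eval_X, eval_C, eval_one]
  ring

theorem DF_factorization_a_eq_neg_one_general (b c g : ℂ) (U : Set ℂ) (hU : IsOpen U)
    (u : ℂ → ℂ) (hu : DifferentiableOn ℂ u U) (x : ℂ) (hx : x ∈ U) :
    DFop (-1) b c g u x = Dn1 b c g (Dn2 b c g u) x := by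
  have hux : AnalyticAt ℂ u x := hu.analyticAt (hU.mem_nhds hx)
  rw [Dn1, Dn2_eq_secondOrderOp, (hasDerivAt_secondOrderOp _ _ _ hux).deriv]
  simp only [DFop, DF1, DF2, DF3, secondOrderOp, derivative_mul, derivative_sub,
    derivative_X_pow, derivative_X, derivative_C, derivative_one, eval_add, eval_sub,
    eval_mul, eval_pow, eval_X, eval_C, eval_one, eval_zero]
  ring

theorem DF_factorization_a_eq_neg_one (b c g : ℂ) (U : Set ℂ) (hU : IsOpen U)
    (hU0 : (0 : ℂ) ∉ U) (hU1 : (1 : ℂ) ∉ U)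
    (u : ℂ → ℂ) (hu : DifferentiableOn ℂ u U) (x : ℂ) (hx : x ∈ U) :
    DFop (-1) b c g u x = Dn1 b c g (Dn2 b c g u) x :=
  DF_factorization_a_eq_neg_one_general b c g U hU u hu x hx
end

section
/- Characterization of the singular points of the variety X₅: let y = (y₁,…,y₈) ∈ ℂ⁸ with y ≠ 0, y₁+⋯+y₈ = 0 and y₁³+⋯+y₈³ = 0. Then there exists λ ∈ ℂ such that 3yᵢ² = λ for all i = 1,…,8 (i.e. the gradient of F₈ at y is proportional to (1,…,1), so that the corresponding projective point is a singular point of X₅) if and only if there exist t ∈ ℂ∖{0} and ε ∈ {1,−1}⁸ with ε₁+⋯+ε₈ = 0 such that yᵢ = t·εᵢ for all i. In particular, the singular points of X₅ are exactly the finitely many projective points [ε₁ : ⋯ : ε₈] with εᵢ = ±1 and ε₁+⋯+ε₈ = 0, hence they are isolated. -/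
/-!
If all `yᵢ²` are equal and `y ≠ 0`, pick a coordinate `t = yⱼ ≠ 0`; then `(yᵢ / t)² = 1`, so
`εᵢ := yᵢ / t` is a sign vector with `y = t ε`, and `∑ εᵢ = (∑ yᵢ) / t = 0`. Conversely a
multiple of a sign vector has constant squares `yᵢ² = t²`.
-/

theorem exists_ne_zero_div_eq_one_or_neg_one {K ι : Type*} [Field K] {y : ι → K} (hy : y ≠ 0)
    (hsq : ∀ i j, y i ^ 2 = y j ^ 2) : ∃ t ≠ 0, ∀ i, y i / t = 1 ∨ y i / t = -1 := by
  obtain ⟨j, hj⟩ := Function.ne_iff.1 hy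
  exact ⟨y j, hj, fun i => sq_eq_one_iff.1 (by rw [div_pow, hsq i j, div_self (pow_ne_zero 2 hj)])⟩

theorem X5_singular_points_general (y : Fin 8 → ℂ) (hy : y ≠ 0)
    (hsum : ∑ i, y i = 0) :
    (∃ lam : ℂ, ∀ i, 3 * (y i)^2 = lam) ↔
    (∃ t : ℂ, t ≠ 0 ∧ ∃ ε : Fin 8 → ℂ,
      (∀ i, ε i = 1 ∨ ε i = -1) ∧ (∑ i, ε i = 0) ∧ (∀ i, y i = t * ε i)) := by
  constructor
  · rintro ⟨lam, hlam⟩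
    obtain ⟨t, ht, hsign⟩ := exists_ne_zero_div_eq_one_or_neg_one hy fun i j => by
      linear_combination (hlam i - hlam j) / 3
    exact ⟨t, ht, fun i => y i / t, hsign, by rw [← Finset.sum_div, hsum, zero_div],
      fun i => (mul_div_cancel₀ _ ht).symm⟩
  · rintro ⟨t, -, ε, hε, -, hyε⟩
    exact ⟨3 * t ^ 2, fun i => by rw [hyε i, mul_pow, sq_eq_one_iff.2 (hε i), mul_one]⟩

theorem X5_singular_points (y : Fin 8 → ℂ) (hy : y ≠ 0)
    (hsum : ∑ i, y i = 0) (hcube : ∑ i, (y i)^3 = 0) :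
    (∃ lam : ℂ, ∀ i, 3 * (y i)^2 = lam) ↔
    (∃ t : ℂ, t ≠ 0 ∧ ∃ ε : Fin 8 → ℂ,
      (∀ i, ε i = 1 ∨ ε i = -1) ∧ (∑ i, ε i = 0) ∧ (∀ i, y i = t * ε i)) :=
  X5_singular_points_general y hy hsum
end
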